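/- arXiv:1909.13357 — 2 statements merged into one kernel-verified Lean document; each statement's English description precedes it below -/
import Mathlib

section
/- For the fundamental system Y₁, Y₂ of −y″ + qy = ρ²y on [0, b_N] with asymptotics Y_j^{(ν)}(x, ρ) = (±iρ)^ν e^{±iρx}(1 + O(1/ρ)), the matrix B built from the jump and boundary data satisfies det B = (Y₂′(0,ρ)Y₁(0,ρ) − Y₁′(0,ρ)Y₂(0,ρ))^N = (−2iρ)^N (1 + O(1/ρ)) as ρ → ∞, Im ρ ≥ 0. -/
/-!
Both `Y₁` and `Y₂` solve `y'' = (q - ρ²) y`, so their Wronskian is constant on `[0, b_N]`; every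
diagonal block of `B` has determinant `W(a_k) = W(0)`, hence `det B = W(0)^N`. The asymptotics at
`x = 0` give `W(0) = -2iρ (1 + O(1/ρ))`, and a relative error `δ ≤ 1` of a base costs at most
`(2^N - 1) δ` in relative error of its `N`-th power.
-/

theorem norm_pow_sub_pow_le_of_norm_sub_le {R : Type*} [SeminormedRing R] [NormOneClass R]
    {a b : R} {δ : ℝ} (hab : ‖a - b‖ ≤ δ * ‖b‖) (hδ : δ ≤ 1) (n : ℕ) :
    ‖a ^ n - b ^ n‖ ≤ (2 ^ n - 1) * δ * ‖b‖ ^ n := by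
  induction n with
  | zero => simp
  | succ n ih =>
    have ha : ‖a‖ ≤ 2 * ‖b‖ := by
      nlinarith [norm_le_insert' a b, norm_nonneg b]
    have hδb : 0 ≤ δ * ‖b‖ := (norm_nonneg _).trans hab
    have hsplit : a ^ (n + 1) - b ^ (n + 1) = a * (a ^ n - b ^ n) + (a - b) * b ^ n := by
      rw [pow_succ', pow_succ']; noncomm_ring
    calc ‖a ^ (n + 1) - b ^ (n + 1)‖
        ≤ ‖a‖ * ‖a ^ n - b ^ n‖ + ‖a - b‖ * ‖b ^ n‖ := by
          rw [hsplit]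
          exact (norm_add_le _ _).trans (add_le_add (norm_mul_le _ _) (norm_mul_le _ _))
      _ ≤ 2 * ‖b‖ * ((2 ^ n - 1) * δ * ‖b‖ ^ n) + δ * ‖b‖ * ‖b‖ ^ n :=
          add_le_add (mul_le_mul ha ih (norm_nonneg _) (by positivity))
            (mul_le_mul hab (norm_pow_le b n) (norm_nonneg _) hδb)
      _ = (2 ^ (n + 1) - 1) * δ * ‖b‖ ^ (n + 1) := by ring

theorem norm_mul_sub_mul_sub_neg_two_mul_le {u u' v v' ω : ℂ} {ε : ℝ}
    (hu : ‖u - 1‖ ≤ ε) (hu' : ‖u' - ω‖ ≤ ε * ‖ω‖)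
    (hv : ‖v - 1‖ ≤ ε) (hv' : ‖v' - -ω‖ ≤ ε * ‖ω‖) :
    ‖(v' * u - u' * v) - -2 * ω‖ ≤ ε * (2 + ε) * ‖-2 * ω‖ := by
  have hε : 0 ≤ ε := (norm_nonneg _).trans hu
  have hun : ‖u‖ ≤ 1 + ε := (norm_le_insert' u 1).trans (by rw [norm_one]; gcongr)
  have hvn : ‖v‖ ≤ 1 + ε := (norm_le_insert' v 1).trans (by rw [norm_one]; gcongr)
  have hsplit : (v' * u - u' * v) - -2 * ω
      = (v' - -ω) * u - ω * (u - 1) - ((u' - ω) * v + ω * (v - 1)) := by ring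
  have hω2 : ‖-2 * ω‖ = 2 * ‖ω‖ := by simp
  calc ‖(v' * u - u' * v) - -2 * ω‖
      ≤ ‖v' - -ω‖ * ‖u‖ + ‖ω‖ * ‖u - 1‖ + (‖u' - ω‖ * ‖v‖ + ‖ω‖ * ‖v - 1‖) := by
        rw [hsplit, ← norm_mul, ← norm_mul, ← norm_mul, ← norm_mul]
        exact (norm_sub_le _ _).trans
          (add_le_add (norm_sub_le _ _) (norm_add_le _ _))
    _ ≤ ε * ‖ω‖ * (1 + ε) + ‖ω‖ * ε + (ε * ‖ω‖ * (1 + ε) + ‖ω‖ * ε) := by gcongr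
    _ = ε * (2 + ε) * ‖-2 * ω‖ := by rw [hω2]; ring

theorem Convex.wronskian_eq {𝔸 : Type*} [NormedCommRing 𝔸] [NormedAlgebra ℝ 𝔸] {s : Set ℝ}
    (hs : Convex ℝ s) {p y₁ y₁' y₂ y₂' : ℝ → 𝔸}
    (h₁ : ∀ x ∈ s, HasDerivWithinAt y₁ (y₁' x) s x)
    (h₁' : ∀ x ∈ s, HasDerivWithinAt y₁' (p x * y₁ x) s x)
    (h₂ : ∀ x ∈ s, HasDerivWithinAt y₂ (y₂' x) s x)
    (h₂' : ∀ x ∈ s, HasDerivWithinAt y₂' (p x * y₂ x) s x)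
    {x₀ x : ℝ} (hx₀ : x₀ ∈ s) (hx : x ∈ s) :
    y₁ x * y₂' x - y₁' x * y₂ x = y₁ x₀ * y₂' x₀ - y₁' x₀ * y₂ x₀ := by
  have hW : ∀ t ∈ s, HasDerivWithinAt (y₁ * y₂' - y₁' * y₂) 0 s t := by
    intro t ht
    exact (((h₁ t ht).mul (h₂' t ht)).sub ((h₁' t ht).mul (h₂ t ht))).congr_deriv (by ring)
  have h := hs.norm_image_sub_le_of_norm_hasDerivWithin_le hW (fun _ _ => norm_zero.le) hx₀ hx
  simpa only [Pi.sub_apply, Pi.mul_apply, zero_mul, norm_le_zero_iff, sub_eq_zero] using h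

open Complex in
theorem stmt10_general (N : ℕ) (bN : ℝ) (hbN : 0 < bN)
    (a : ℕ → ℝ) (ha : ∀ k < N, a k ∈ Set.Icc 0 bN)
    (q : ℝ → ℂ)
    (Y1 Y1' Y2 Y2' : ℂ → ℝ → ℂ)
    (hode : ∀ ρ : ℂ, 0 ≤ ρ.im → ∀ x ∈ Set.Icc 0 bN,
      HasDerivWithinAt (Y1 ρ) (Y1' ρ x) (Set.Icc 0 bN) x ∧
      HasDerivWithinAt (Y1' ρ) ((q x - ρ ^ 2) * Y1 ρ x) (Set.Icc 0 bN) x ∧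
      HasDerivWithinAt (Y2 ρ) (Y2' ρ x) (Set.Icc 0 bN) x ∧
      HasDerivWithinAt (Y2' ρ) ((q x - ρ ^ 2) * Y2 ρ x) (Set.Icc 0 bN) x)
    (hasym : ∃ C R : ℝ, 0 < C ∧ 0 < R ∧ ∀ ρ : ℂ, 0 ≤ ρ.im → R ≤ ‖ρ‖ →
      ∀ x ∈ Set.Icc 0 bN,
        ‖Y1 ρ x - exp (I * ρ * x)‖ ≤ C / ‖ρ‖ * ‖exp (I * ρ * x)‖ ∧
        ‖Y1' ρ x - I * ρ * exp (I * ρ * x)‖ ≤ C / ‖ρ‖ * ‖ρ * exp (I * ρ * x)‖ ∧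
        ‖Y2 ρ x - exp (-(I * ρ * x))‖ ≤ C / ‖ρ‖ * ‖exp (-(I * ρ * x))‖ ∧
        ‖Y2' ρ x - (-(I * ρ)) * exp (-(I * ρ * x))‖ ≤ C / ‖ρ‖ * ‖ρ * exp (-(I * ρ * x))‖) :
    ∃ C R : ℝ, 0 < C ∧ 0 < R ∧ ∀ ρ : ℂ, 0 ≤ ρ.im → R ≤ ‖ρ‖ →
      (∏ k ∈ Finset.range N,
          ((-Y1 ρ (a k)) * (-Y2' ρ (a k)) - (-Y1' ρ (a k)) * (-Y2 ρ (a k))))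
        = (Y2' ρ 0 * Y1 ρ 0 - Y1' ρ 0 * Y2 ρ 0) ^ N ∧
      ‖(Y2' ρ 0 * Y1 ρ 0 - Y1' ρ 0 * Y2 ρ 0) ^ N - (-2 * I * ρ) ^ N‖
        ≤ C / ‖ρ‖ * ‖(-2 * I * ρ) ^ N‖ := by
  obtain ⟨C, R, hC, hR, hasym⟩ := hasym
  refine ⟨3 * 2 ^ N * C, max R (3 * C), by positivity, lt_max_of_lt_left hR, fun ρ hρ hρR => ?_⟩
  have h0 : (0 : ℝ) ∈ Set.Icc 0 bN := ⟨le_rfl, hbN.le⟩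
  have hW : ∀ x ∈ Set.Icc 0 bN, Y1 ρ x * Y2' ρ x - Y1' ρ x * Y2 ρ x
      = Y1 ρ 0 * Y2' ρ 0 - Y1' ρ 0 * Y2 ρ 0 := fun x hx =>
    (convex_Icc 0 bN).wronskian_eq (fun t ht => (hode ρ hρ t ht).1)
      (fun t ht => (hode ρ hρ t ht).2.1) (fun t ht => (hode ρ hρ t ht).2.2.1)
      (fun t ht => (hode ρ hρ t ht).2.2.2) h0 hx
  refine ⟨?_, ?_⟩
  · rw [Finset.prod_congr rfl fun k hk => ?_, Finset.prod_const, Finset.card_range]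
    linear_combination hW (a k) (ha k (Finset.mem_range.mp hk))
  · have hρ0 : 0 < ‖ρ‖ := by linarith [le_of_max_le_right hρR]
    obtain ⟨hY1, hY1', hY2, hY2'⟩ := hasym ρ hρ (le_of_max_le_left hρR) 0 h0
    simp only [ofReal_zero, mul_zero, neg_zero, exp_zero, mul_one, norm_one] at hY1 hY1' hY2 hY2'
    set ε := C / ‖ρ‖ with hε
    have hε3 : ε ≤ 1 / 3 := by
      rw [hε, div_le_iff₀ hρ0]; linarith [le_of_max_le_right hρR]
    have hε0 : 0 ≤ ε := by positivity
    have hIρ : ‖I * ρ‖ = ‖ρ‖ := by simp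
    rw [← hIρ] at hY1' hY2'
    have hbase := norm_mul_sub_mul_sub_neg_two_mul_le hY1 hY1' hY2 hY2'
    have hpow := norm_pow_sub_pow_le_of_norm_sub_le hbase (by nlinarith) N
    rw [← mul_assoc (-2 : ℂ)] at hpow
    calc _ ≤ (2 ^ N - 1) * (ε * (2 + ε)) * ‖-2 * I * ρ‖ ^ N := hpow
      _ ≤ 2 ^ N * (ε * 3) * ‖-2 * I * ρ‖ ^ N := by gcongr <;> linarith
      _ = 3 * 2 ^ N * C / ‖ρ‖ * ‖(-2 * I * ρ) ^ N‖ := by rw [norm_pow, hε]; ring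

open Complex in
/-- For the Birkhoff fundamental system `Y₁, Y₂` of `-y'' + q y = ρ² y` on `[0, b_N]` with
`Y_j^{(ν)}(x,ρ) = (±iρ)^ν e^{±iρx}(1 + O(1/ρ))` (uniformly, `Im ρ ≥ 0`), the determinant of the
matrix `B` built from the data `r_{kν} = -Y₁^{(ν-1)}(a_k, ρ)`, `s_{kν} = -Y₂^{(ν-1)}(a_k, ρ)`
satisfies `det B = (Y₂′(0,ρ)Y₁(0,ρ) - Y₁′(0,ρ)Y₂(0,ρ))^N = (-2iρ)^N (1 + O(1/ρ))` as
`ρ → ∞`, `Im ρ ≥ 0`. -/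
theorem stmt10 (N : ℕ) (hN : 1 ≤ N) (bN : ℝ) (hbN : 0 < bN)
    (a : ℕ → ℝ) (ha0 : a 0 = 0) (ha : ∀ k < N, a k ∈ Set.Icc 0 bN)
    (q : ℝ → ℂ) (hq : ContinuousOn q (Set.Icc 0 bN))
    (Y1 Y1' Y2 Y2' : ℂ → ℝ → ℂ)
    (hode : ∀ ρ : ℂ, 0 ≤ ρ.im → ∀ x ∈ Set.Icc 0 bN,
      HasDerivWithinAt (Y1 ρ) (Y1' ρ x) (Set.Icc 0 bN) x ∧
      HasDerivWithinAt (Y1' ρ) ((q x - ρ ^ 2) * Y1 ρ x) (Set.Icc 0 bN) x ∧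
      HasDerivWithinAt (Y2 ρ) (Y2' ρ x) (Set.Icc 0 bN) x ∧
      HasDerivWithinAt (Y2' ρ) ((q x - ρ ^ 2) * Y2 ρ x) (Set.Icc 0 bN) x)
    (hasym : ∃ C R : ℝ, 0 < C ∧ 0 < R ∧ ∀ ρ : ℂ, 0 ≤ ρ.im → R ≤ ‖ρ‖ →
      ∀ x ∈ Set.Icc 0 bN,
        ‖Y1 ρ x - exp (I * ρ * x)‖ ≤ C / ‖ρ‖ * ‖exp (I * ρ * x)‖ ∧
        ‖Y1' ρ x - I * ρ * exp (I * ρ * x)‖ ≤ C / ‖ρ‖ * ‖ρ * exp (I * ρ * x)‖ ∧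
        ‖Y2 ρ x - exp (-(I * ρ * x))‖ ≤ C / ‖ρ‖ * ‖exp (-(I * ρ * x))‖ ∧
        ‖Y2' ρ x - (-(I * ρ)) * exp (-(I * ρ * x))‖ ≤ C / ‖ρ‖ * ‖ρ * exp (-(I * ρ * x))‖) :
    ∃ C R : ℝ, 0 < C ∧ 0 < R ∧ ∀ ρ : ℂ, 0 ≤ ρ.im → R ≤ ‖ρ‖ →
      (∏ k ∈ Finset.range N,
          ((-Y1 ρ (a k)) * (-Y2' ρ (a k)) - (-Y1' ρ (a k)) * (-Y2 ρ (a k))))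
        = (Y2' ρ 0 * Y1 ρ 0 - Y1' ρ 0 * Y2 ρ 0) ^ N ∧
      ‖(Y2' ρ 0 * Y1 ρ 0 - Y1' ρ 0 * Y2 ρ 0) ^ N - (-2 * I * ρ) ^ N‖
        ≤ C / ‖ρ‖ * ‖(-2 * I * ρ) ^ N‖ :=
  stmt10_general N bN hbN a ha q Y1 Y1' Y2 Y2' hode hasym
end

section
/- If two time-scale Sturm–Liouville problems on T have equal potentials on T_{m,0} = ⋃_{k=1}^{m−1}[a_k, b_k] and equal Weyl functions M(λ) = M̃(λ), then Φ(x, λ) = Φ̃(x, λ) for all x ∈ T_{m,0}, and moreover Φ(a_m, λ) = Φ̃(a_m, λ) and Φ′(a_m, λ) = Φ̃′(a_m, λ), so the truncated Weyl functions coincide: M_m(λ) = M̃_m(λ). -/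
/-!
On each interval `[a_k, b_k]` with `k < m` the two potentials agree, so `S` and `S̃` (and likewise
`C` and `C̃`) solve the same linear equation `y'' = (q - λ) y`; if their Cauchy data agree at
`a_k`, Grönwall's inequality applied to the difference makes them agree on the whole interval.
The jump matrix at `b_k` involves only `q(b_k)` and `λ`, so the Cauchy data then agree at
`a_{k+1}`. By induction this holds up to `a_m`, and since `M = M̃` the Weyl solutions
`Φ = S + M C` and `Φ̃` agree there too.
-/

/-- `(y, y')` solves the Sturm–Liouville system on `T = ⋃_{k<N} [a_k, b_k]` (`0`-indexed):
the equation `-y'' + q y = λ y` on each interval `[a_k, b_k]`, together with the jump conditions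
`(y(a_{k+1}), y'(a_{k+1}))ᵀ = A_k(λ) (y(b_k), y'(b_k))ᵀ`, where `A_k(λ)` has entries
`α₁₁ = 1`, `α₁₂ = a_{k+1} - b_k`, `α₂₁ = (a_{k+1} - b_k)(q(b_k) - λ)`,
`α₂₂ = 1 + (a_{k+1} - b_k)²(q(b_k) - λ)`. -/
def SLSol (N : ℕ) (a b : ℕ → ℝ) (q : ℝ → ℂ) (lam : ℂ) (y y' : ℝ → ℂ) : Prop :=
  (∀ k < N, ∀ x ∈ Set.Icc (a k) (b k),
      HasDerivWithinAt y (y' x) (Set.Icc (a k) (b k)) x ∧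
      HasDerivWithinAt y' ((q x - lam) * y x) (Set.Icc (a k) (b k)) x) ∧
  (∀ k, k + 1 < N →
      y (a (k + 1)) = y (b k) + ((a (k + 1) - b k : ℝ) : ℂ) * y' (b k) ∧
      y' (a (k + 1)) = ((a (k + 1) - b k : ℝ) : ℂ) * (q (b k) - lam) * y (b k)
        + (1 + ((a (k + 1) - b k : ℝ) : ℂ) ^ 2 * (q (b k) - lam)) * y' (b k))

open Set

def IsSLSolOn (s : Set ℝ) (q : ℝ → ℂ) (lam : ℂ) (y y' : ℝ → ℂ) : Prop :=
  ∀ x ∈ s, HasDerivWithinAt y (y' x) s x ∧ HasDerivWithinAt y' ((q x - lam) * y x) s x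

namespace IsSLSolOn

variable {s : Set ℝ} {q qt : ℝ → ℂ} {lam : ℂ} {y y' z z' : ℝ → ℂ}

theorem congr_potential (h : IsSLSolOn s qt lam y y') (hq : EqOn q qt s) :
    IsSLSolOn s q lam y y' :=
  fun x hx => by rw [hq hx]; exact h x hx

theorem sub (hy : IsSLSolOn s q lam y y') (hz : IsSLSolOn s q lam z z') :
    IsSLSolOn s q lam (y - z) (y' - z') := fun x hx =>
  ⟨(hy x hx).1.sub (hz x hx).1,
    by simpa only [Pi.sub_apply, mul_sub] using (hy x hx).2.sub (hz x hx).2⟩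

/-- Grönwall applied to `(y, y')`, whose derivative `(y', (q - λ) y)` is bounded by
`max 1 ‖q - λ‖∞ · ‖(y, y')‖`. -/
theorem eq_zero_of_cauchyData_eq_zero {A B : ℝ} (hq : ContinuousOn q (Icc A B))
    (hy : IsSLSolOn (Icc A B) q lam y y') (h0 : y A = 0) (h0' : y' A = 0) :
    ∀ x ∈ Icc A B, y x = 0 ∧ y' x = 0 := by
  obtain ⟨K, hK⟩ := isCompact_Icc.exists_bound_of_continuousOn (hq.sub continuousOn_const)
  have hderiv : ∀ x ∈ Icc A B, HasDerivWithinAt (fun t => (y t, y' t))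
      (y' x, (q x - lam) * y x) (Icc A B) x :=
    fun x hx => (hy x hx).1.prodMk (hy x hx).2
  have hbound : ∀ x ∈ Icc A B,
      ‖(y' x, (q x - lam) * y x)‖ ≤ max 1 K * ‖(y x, y' x)‖ := by
    intro x hx
    have hK1 : (1 : ℝ) ≤ max 1 K := le_max_left _ _
    rw [Prod.norm_mk, Prod.norm_mk, norm_mul]
    refine max_le ?_ ?_
    · exact (le_max_right _ _).trans
        (le_mul_of_one_le_left ((norm_nonneg _).trans (le_max_left _ _)) hK1)
    · exact mul_le_mul ((hK x hx).trans (le_max_right _ _)) (le_max_left _ _)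
        (norm_nonneg _) (zero_le_one.trans hK1)
  have hzero := eq_zero_of_abs_deriv_le_mul_abs_self_of_eq_zero_right
    (fun x hx => (hderiv x hx).continuousWithinAt)
    (fun x hx => (hderiv x (Ico_subset_Icc_self hx)).mono_of_mem_nhdsWithin
      (Icc_mem_nhdsGE_of_mem hx))
    (by simp [h0, h0']) (fun x hx => hbound x (Ico_subset_Icc_self hx))
  intro x hx
  simpa using hzero x hx

theorem eq_of_cauchyData_eq {A B : ℝ} (hq : ContinuousOn q (Icc A B))
    (hy : IsSLSolOn (Icc A B) q lam y y') (hz : IsSLSolOn (Icc A B) q lam z z')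
    (h0 : y A = z A) (h0' : y' A = z' A) :
    ∀ x ∈ Icc A B, y x = z x ∧ y' x = z' x := by
  intro x hx
  have := (hy.sub hz).eq_zero_of_cauchyData_eq_zero hq (sub_eq_zero.2 h0) (sub_eq_zero.2 h0') x hx
  exact ⟨sub_eq_zero.1 this.1, sub_eq_zero.1 this.2⟩

end IsSLSolOn

namespace SLSol

variable {N m : ℕ} {a b : ℕ → ℝ} {q qt : ℝ → ℂ} {lam : ℂ} {y y' z z' : ℝ → ℂ}

theorem isSLSolOn (h : SLSol N a b q lam y y') {k : ℕ} (hk : k < N) :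
    IsSLSolOn (Icc (a k) (b k)) q lam y y' :=
  h.1 k hk

theorem cauchyData_eq_succ (hy : SLSol N a b q lam y y') (hz : SLSol N a b qt lam z z') {k : ℕ}
    (hk : k + 1 < N) (hq : q (b k) = qt (b k)) (hb : y (b k) = z (b k))
    (hb' : y' (b k) = z' (b k)) :
    y (a (k + 1)) = z (a (k + 1)) ∧ y' (a (k + 1)) = z' (a (k + 1)) := by
  obtain ⟨hy₀, hy₁⟩ := hy.2 k hk
  obtain ⟨hz₀, hz₁⟩ := hz.2 k hk
  exact ⟨by rw [hy₀, hz₀, hb, hb'], by rw [hy₁, hz₁, hb, hb', hq]⟩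

theorem eq_on_Icc (hy : SLSol N a b q lam y y') (hz : SLSol N a b qt lam z z') {k : ℕ}
    (hk : k < N) (hq : ContinuousOn q (Icc (a k) (b k))) (hqt : EqOn q qt (Icc (a k) (b k)))
    (ha : y (a k) = z (a k)) (ha' : y' (a k) = z' (a k)) :
    ∀ x ∈ Icc (a k) (b k), y x = z x ∧ y' x = z' x :=
  (hy.isSLSolOn hk).eq_of_cauchyData_eq hq ((hz.isSLSolOn hk).congr_potential hqt) ha ha'

theorem cauchyData_eq_of_le (hy : SLSol N a b q lam y y') (hz : SLSol N a b qt lam z z')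
    (hab : ∀ k < N, a k ≤ b k) (hm : m ≤ N - 1)
    (hq : ∀ k < m, ContinuousOn q (Icc (a k) (b k)))
    (hqt : ∀ k < m, EqOn q qt (Icc (a k) (b k)))
    (h0 : y (a 0) = z (a 0)) (h0' : y' (a 0) = z' (a 0)) :
    ∀ k ≤ m, y (a k) = z (a k) ∧ y' (a k) = z' (a k) := by
  intro k hk
  induction k with
  | zero => exact ⟨h0, h0'⟩
  | succ k ih =>
    have hkm : k < m := by omega
    have hbk : b k ∈ Icc (a k) (b k) := right_mem_Icc.2 (hab k (by omega))
    obtain ⟨ha, ha'⟩ := ih hkm.le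
    obtain ⟨hb, hb'⟩ := hy.eq_on_Icc hz (by omega) (hq k hkm) (hqt k hkm) ha ha' (b k) hbk
    exact hy.cauchyData_eq_succ hz (by omega) (hqt k hkm hbk) hb hb'

theorem eq_on_truncation (hy : SLSol N a b q lam y y') (hz : SLSol N a b qt lam z z')
    (hab : ∀ k < N, a k ≤ b k) (hm : m ≤ N - 1)
    (hq : ContinuousOn q (⋃ k ∈ Finset.range m, Icc (a k) (b k)))
    (hqt : EqOn q qt (⋃ k ∈ Finset.range m, Icc (a k) (b k)))
    (h0 : y (a 0) = z (a 0)) (h0' : y' (a 0) = z' (a 0)) :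
    (∀ x ∈ ⋃ k ∈ Finset.range m, Icc (a k) (b k), y x = z x) ∧
      y (a m) = z (a m) ∧ y' (a m) = z' (a m) := by
  have hsub : ∀ k < m, Icc (a k) (b k) ⊆ ⋃ k ∈ Finset.range m, Icc (a k) (b k) :=
    fun k hk => subset_biUnion_of_mem (u := fun k => Icc (a k) (b k)) (Finset.mem_range.2 hk)
  have hqk k (hk : k < m) := hq.mono (hsub k hk)
  have hqtk k (hk : k < m) := hqt.mono (hsub k hk)
  have hleft := hy.cauchyData_eq_of_le hz hab hm hqk hqtk h0 h0'
  refine ⟨fun x hx => ?_, hleft m le_rfl⟩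
  obtain ⟨k, hk, hxk⟩ := mem_iUnion₂.1 hx
  have hkm := Finset.mem_range.1 hk
  obtain ⟨ha, ha'⟩ := hleft k hkm.le
  exact (hy.eq_on_Icc hz (by omega) (hqk k hkm) (hqtk k hkm) ha ha' x hxk).1

end SLSol

theorem stmt19_general (N : ℕ) (a b : ℕ → ℝ)
    (hab : ∀ k < N, a k < b k)
    (q qt : ℝ → ℂ)
    (hq : ContinuousOn q (⋃ k ∈ Finset.range N, Set.Icc (a k) (b k)))
    (S S' C C' St St' Ct Ct' : ℂ → ℝ → ℂ) (M Mt : ℂ → ℂ)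
    (hS : ∀ lam : ℂ, SLSol N a b q lam (S lam) (S' lam))
    (hC : ∀ lam : ℂ, SLSol N a b q lam (C lam) (C' lam))
    (hSt : ∀ lam : ℂ, SLSol N a b qt lam (St lam) (St' lam))
    (hCt : ∀ lam : ℂ, SLSol N a b qt lam (Ct lam) (Ct' lam))
    (hinit : ∀ lam : ℂ, S lam (a 0) = 0 ∧ S' lam (a 0) = 1 ∧
      C lam (a 0) = 1 ∧ C' lam (a 0) = 0)
    (hinitt : ∀ lam : ℂ, St lam (a 0) = 0 ∧ St' lam (a 0) = 1 ∧
      Ct lam (a 0) = 1 ∧ Ct' lam (a 0) = 0)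
    (m : ℕ) (hm2 : m ≤ N - 1)
    (hqeq : ∀ x ∈ ⋃ k ∈ Finset.range m, Set.Icc (a k) (b k), q x = qt x)
    (hMM : ∀ lam : ℂ, M lam = Mt lam) :
    ∀ lam : ℂ,
      (∀ x ∈ ⋃ k ∈ Finset.range m, Set.Icc (a k) (b k),
        S lam x + M lam * C lam x = St lam x + Mt lam * Ct lam x) ∧
      S lam (a m) + M lam * C lam (a m) = St lam (a m) + Mt lam * Ct lam (a m) ∧
      S' lam (a m) + M lam * C' lam (a m) = St' lam (a m) + Mt lam * Ct' lam (a m) ∧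
      (S lam (a m) + M lam * C lam (a m)) / (S' lam (a m) + M lam * C' lam (a m)) =
        (St lam (a m) + Mt lam * Ct lam (a m)) /
          (St' lam (a m) + Mt lam * Ct' lam (a m)) := by
  intro lam
  have hab' : ∀ k < N, a k ≤ b k := fun k hk => (hab k hk).le
  have hqm : ContinuousOn q (⋃ k ∈ Finset.range m, Icc (a k) (b k)) :=
    hq.mono (biUnion_subset_biUnion_left (Finset.range_subset_range.2 (by omega)))
  obtain ⟨hS0, hS0', hC0, hC0'⟩ := hinit lam
  obtain ⟨hSt0, hSt0', hCt0, hCt0'⟩ := hinitt lam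
  obtain ⟨hSx, hSa, hSa'⟩ := (hS lam).eq_on_truncation (hSt lam) hab' hm2 hqm
    (fun x hx => hqeq x hx) (hS0.trans hSt0.symm) (hS0'.trans hSt0'.symm)
  obtain ⟨hCx, hCa, hCa'⟩ := (hC lam).eq_on_truncation (hCt lam) hab' hm2 hqm
    (fun x hx => hqeq x hx) (hC0.trans hCt0.symm) (hC0'.trans hCt0'.symm)
  have hΦ : S lam (a m) + M lam * C lam (a m) = St lam (a m) + Mt lam * Ct lam (a m) := by
    rw [hSa, hCa, hMM]
  have hΦ' : S' lam (a m) + M lam * C' lam (a m) = St' lam (a m) + Mt lam * Ct' lam (a m) := by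
    rw [hSa', hCa', hMM]
  exact ⟨fun x hx => by rw [hSx x hx, hCx x hx, hMM], hΦ, hΦ', by rw [hΦ, hΦ']⟩

/-- If two time-scale Sturm–Liouville problems have equal potentials on
`T_{m,0} = ⋃_{k<m} [a_k, b_k]` (`0`-indexed: the first `m` intervals) and equal Weyl functions
`M = M̃`, then the Weyl solutions `Φ = S + M·C` and `Φ̃ = S̃ + M̃·C̃` coincide on `T_{m,0}`,
their values and derivatives at `a_m` coincide, and hence the truncated Weyl functions
`M_m = Φ(a_m,·)/Φ'(a_m,·)` and `M̃_m` coincide. -/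
theorem stmt19 (N : ℕ) (hN : 2 ≤ N) (a b : ℕ → ℝ)
    (hab : ∀ k < N, a k < b k) (hba : ∀ k, k + 1 < N → b k < a (k + 1))
    (q qt : ℝ → ℂ)
    (hq : ContinuousOn q (⋃ k ∈ Finset.range N, Set.Icc (a k) (b k)))
    (hqt : ContinuousOn qt (⋃ k ∈ Finset.range N, Set.Icc (a k) (b k)))
    (S S' C C' St St' Ct Ct' : ℂ → ℝ → ℂ) (M Mt : ℂ → ℂ)
    (hS : ∀ lam : ℂ, SLSol N a b q lam (S lam) (S' lam))
    (hC : ∀ lam : ℂ, SLSol N a b q lam (C lam) (C' lam))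
    (hSt : ∀ lam : ℂ, SLSol N a b qt lam (St lam) (St' lam))
    (hCt : ∀ lam : ℂ, SLSol N a b qt lam (Ct lam) (Ct' lam))
    (hinit : ∀ lam : ℂ, S lam (a 0) = 0 ∧ S' lam (a 0) = 1 ∧
      C lam (a 0) = 1 ∧ C' lam (a 0) = 0)
    (hinitt : ∀ lam : ℂ, St lam (a 0) = 0 ∧ St' lam (a 0) = 1 ∧
      Ct lam (a 0) = 1 ∧ Ct' lam (a 0) = 0)
    (hM : ∀ lam : ℂ, C lam (b (N - 1)) ≠ 0 →
      S lam (b (N - 1)) + M lam * C lam (b (N - 1)) = 0)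
    (hMt : ∀ lam : ℂ, Ct lam (b (N - 1)) ≠ 0 →
      St lam (b (N - 1)) + Mt lam * Ct lam (b (N - 1)) = 0)
    (m : ℕ) (hm1 : 1 ≤ m) (hm2 : m ≤ N - 1)
    (hqeq : ∀ x ∈ ⋃ k ∈ Finset.range m, Set.Icc (a k) (b k), q x = qt x)
    (hMM : ∀ lam : ℂ, M lam = Mt lam) :
    ∀ lam : ℂ,
      (∀ x ∈ ⋃ k ∈ Finset.range m, Set.Icc (a k) (b k),
        S lam x + M lam * C lam x = St lam x + Mt lam * Ct lam x) ∧
      S lam (a m) + M lam * C lam (a m) = St lam (a m) + Mt lam * Ct lam (a m) ∧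
      S' lam (a m) + M lam * C' lam (a m) = St' lam (a m) + Mt lam * Ct' lam (a m) ∧
      (S lam (a m) + M lam * C lam (a m)) / (S' lam (a m) + M lam * C' lam (a m)) =
        (St lam (a m) + Mt lam * Ct lam (a m)) /
          (St' lam (a m) + Mt lam * Ct' lam (a m)) :=
  stmt19_general N a b hab q qt hq S S' C C' St St' Ct Ct' M Mt hS hC hSt hCt hinit hinitt m hm2
    hqeq hMM
end
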